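/- For every odd integer M ≥ 5: 2^M / ( 2·M·C(M−1, (M−1)/2) ) < √(2π)·(M−1)^{3/2} / ( 2·(M² − 3M) ), where C(n,k) denotes the binomial coefficient. -/

import Mathlib

/-!
Write `M = 2n + 1`. The left-hand side is `4ⁿ / ((2n + 1) C(2n, n))` and the right-hand side
simplifies to `n √(πn) / ((n - 1)(2n + 1))`. Wallis' product `W n ≤ π / 2` is exactly the bound
`(4ⁿ / C(2n, n))² ≤ π (n + 1/2)`, and `(n - 1)² (n + 1/2) < n³` finishes the comparison.
-/

open Real Nat

theorem four_pow_div_centralBinom_le_sqrt (n : ℕ) :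
    (4 : ℝ) ^ n / n.centralBinom ≤ √(π * (n + 1 / 2)) := by
  have hW := Wallis.W_le n
  rw [Wallis.W_eq_factorial_ratio] at hW
  have hC : (n.centralBinom : ℝ) = (2 * n)! / n ! ^ 2 := by
    rw [centralBinom_eq_two_mul_choose, cast_choose ℝ (by omega), two_mul, Nat.add_sub_cancel,
      sq]
  refine le_sqrt_of_sq_le ?_
  calc ((4 : ℝ) ^ n / n.centralBinom) ^ 2
      = 2 ^ (4 * n) * n ! ^ 4 / ((2 * n)! ^ 2 * (2 * n + 1)) * (2 * n + 1) := by
        rw [hC, pow_mul, show (2 : ℝ) ^ 4 = 4 ^ 2 by norm_num, ← pow_mul, mul_comm 2 n, pow_mul]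
        field_simp
    _ ≤ π / 2 * (2 * n + 1) := by gcongr
    _ = π * (n + 1 / 2) := by ring

theorem sqrt_pi_mul_add_half_mul_sub_one_lt {x : ℝ} (hx : 1 < x) :
    √(π * (x + 1 / 2)) * (x - 1) < x * √(π * x) := by
  refine lt_of_pow_lt_pow_left₀ 2 (by positivity) ?_
  rw [mul_pow, mul_pow, sq_sqrt (by positivity), sq_sqrt (by positivity)]
  nlinarith [pi_pos]

theorem sqrt_two_pi_mul_rpow_div_eq {x : ℝ} (hx : 1 < x) :
    √(2 * π) * (2 * x) ^ ((3 : ℝ) / 2) / (2 * ((2 * x + 1) ^ 2 - 3 * (2 * x + 1))) =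
      x * √(π * x) / (x - 1) / (2 * x + 1) := by
  have hrpow : (2 * x) ^ ((3 : ℝ) / 2) = 2 * x * √(2 * x) := by
    rw [show (3 : ℝ) / 2 = 1 + 1 / 2 by norm_num, rpow_add (by linarith), rpow_one,
      ← sqrt_eq_rpow]
  have hsqrt : √(2 * π) * √(2 * x) = 2 * √(π * x) := by
    rw [← sqrt_mul (by positivity), show 2 * π * (2 * x) = 2 ^ 2 * (π * x) by ring,
      sqrt_mul (by norm_num), sqrt_sq (by norm_num)]
  have hx1 : x - 1 ≠ 0 := by linarith
  rw [hrpow, show √(2 * π) * (2 * x * √(2 * x)) = 2 * x * (√(2 * π) * √(2 * x)) by ring, hsqrt,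
    show (2 * x + 1) ^ 2 - 3 * (2 * x + 1) = 2 * (2 * x + 1) * (x - 1) by ring]
  field_simp

theorem stmt_13 (M : ℕ) (hModd : Odd M) (hM : 5 ≤ M) :
    (2 : ℝ) ^ M / (2 * M * ((M - 1).choose ((M - 1) / 2) : ℝ)) <
      Real.sqrt (2 * Real.pi) * ((M : ℝ) - 1) ^ ((3 : ℝ) / 2) /
        (2 * ((M : ℝ) ^ 2 - 3 * M)) := by
  obtain ⟨n, rfl⟩ := hModd
  have hn : (1 : ℝ) < n := by exact_mod_cast (show 1 < n by omega)
  have hchoose : (2 * n + 1 - 1).choose ((2 * n + 1 - 1) / 2) = n.centralBinom := by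
    rw [Nat.add_sub_cancel, Nat.mul_div_cancel_left n two_pos, centralBinom_eq_two_mul_choose]
  have hlhs : (2 : ℝ) ^ (2 * n + 1) / (2 * (2 * n + 1 : ℕ) * (n.centralBinom : ℝ)) =
      4 ^ n / n.centralBinom / (2 * n + 1) := by
    rw [pow_succ, pow_mul]
    push_cast
    field_simp
    norm_num
  rw [hchoose, hlhs]
  push_cast
  rw [add_sub_cancel_right, sqrt_two_pi_mul_rpow_div_eq hn]
  gcongr ?_ / _
  rw [lt_div_iff₀ (by linarith)]
  calc (4 : ℝ) ^ n / n.centralBinom * (n - 1) ≤ √(π * (n + 1 / 2)) * (n - 1) :=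
        mul_le_mul_of_nonneg_right (four_pow_div_centralBinom_le_sqrt n) (by linarith)
    _ < n * √(π * n) := sqrt_pi_mul_add_half_mul_sub_one_lt hn
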